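/- arXiv:1709.03424 — 3 statements merged into one kernel-verified Lean document; each statement's English description precedes it below -/
import Mathlib

section
/- Let m, n, w, d, l, v be natural numbers with 1 ≤ w < m, l ∣ n, 1 ≤ v ≤ l, v ≤ l·w, and d ≥ (n/l)·min(v, l−v). Then (Nat.choose l v)^(n/l) · w^(n·v/l) · (m−w)^(n − n·v/l) · A(m, n, w, d) ≤ m^n · A((m−1)·l, n/l, l·w − v, d − (n/l)·min(v, l−v)). -/
open Finset

/-- Total Hamming distance between two words in `J(m,w)^n`:
the number of positions (among all `m·n` entries) in which they differ. -/
def arrDist {m n : ℕ} (X Y : Fin n → Fin m → ZMod 2) : ℕ :=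
  ∑ k, hammingDist (X k) (Y k)

/-- `C` is a constant-weight array code in `J(m,w)^n` with minimum distance `2d`. -/
def isCWAC (m n w d : ℕ) (C : Finset (Fin n → Fin m → ZMod 2)) : Prop :=
  C.Nonempty ∧ (∀ X ∈ C, ∀ k, hammingNorm (X k) = w) ∧
    ∀ X ∈ C, ∀ Y ∈ C, X ≠ Y → 2 * d ≤ arrDist X Y

/-- Maximum cardinality of a CWAC in `J(m,w)^n` with minimum Hamming distance `2d`. -/
noncomputable def Amax (m n w d : ℕ) : ℕ :=
  sSup { c | ∃ C : Finset (Fin n → Fin m → ZMod 2), isCWAC m n w d C ∧ C.card = c }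

/-- Maximum cardinality of an anticode in `J(m,w)^n` with diameter `2δ`. -/
noncomputable def alphaMax (m n w δ : ℕ) : ℕ :=
  sSup { c | ∃ C : Finset (Fin n → Fin m → ZMod 2), C.Nonempty ∧
    (∀ X ∈ C, ∀ k, hammingNorm (X k) = w) ∧
    (∀ X ∈ C, ∀ Y ∈ C, arrDist X Y ≤ 2 * δ) ∧ C.card = c }

/-- Maximum cardinality of a binary constant-weight code in `J(n,w)` with
minimum Hamming distance `2d`. -/
noncomputable def Bmax (n w d : ℕ) : ℕ :=
  sSup { c | ∃ C : Finset (Fin n → ZMod 2), C.Nonempty ∧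
    (∀ x ∈ C, hammingNorm x = w) ∧
    (∀ x ∈ C, ∀ y ∈ C, x ≠ y → 2 * d ≤ hammingDist x y) ∧ C.card = c }

/-- Maximum cardinality of a nonrestricted `q`-ary code of length `n` with
minimum Hamming distance `d`. -/
noncomputable def Cmax (q n d : ℕ) : ℕ :=
  sSup { c | ∃ C : Finset (Fin n → Fin q), C.Nonempty ∧
    (∀ x ∈ C, ∀ y ∈ C, x ≠ y → d ≤ hammingDist x y) ∧ C.card = c }

/-- `ν(i)`: the number of vectors of weight `u` at Hamming distance `i` from a
fixed vector of weight `w` in `GF(2)^m`. -/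
def nuF (m w u : ℕ) (i : ℕ) : ℕ :=
  if (u + w - i) % 2 = 0 ∧ i ≤ u + w ∧ w ≤ u + i then
    Nat.choose w ((u + w - i) / 2) * Nat.choose (m - w) ((u + i - w) / 2)
  else 0

lemma zmod2_ne_iff (a b : ZMod 2) : a ≠ b ↔ ((a ≠ 0) ∧ ¬(b ≠ 0)) ∨ ((b ≠ 0) ∧ ¬(a ≠ 0)) := by
  revert a b; decide

lemma zmod2_eq_of_iff {a b : ZMod 2} (h : (a ≠ 0) ↔ (b ≠ 0)) : a = b := by
  revert h; revert a b; decide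

lemma symmdiff_count {l v : ℕ} (f g : Fin l → ZMod 2)
    (hf : (univ.filter fun s => f s ≠ 0).card = v)
    (hg : (univ.filter fun s => g s ≠ 0).card = v) :
    (univ.filter fun s => f s ≠ g s).card ≤ 2 * min v (l - v) := by
  classical
  set S := univ.filter fun s => f s ≠ 0 with hS
  set T := univ.filter fun s => g s ≠ 0 with hT
  have h1 : univ.filter (fun s => f s ≠ g s) = (S \ T) ∪ (T \ S) := by
    ext s
    simp only [hS, hT, mem_union, mem_sdiff, mem_filter, mem_univ, true_and]
    rw [zmod2_ne_iff (f s) (g s)]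
  have h2 := card_sdiff_add_card_inter S T
  have h3 := card_sdiff_add_card_inter T S
  have h4 := card_union_add_card_inter S T
  have h5 : (S ∪ T).card ≤ l := by
    simpa using card_le_card (subset_univ (S ∪ T))
  have h6 : (T ∩ S).card = (S ∩ T).card := by rw [inter_comm]
  rw [h1, card_union_of_disjoint disjoint_sdiff_sdiff]
  rw [hf] at h2 h4
  rw [hg] at h3
  omega

lemma count_block {l m w v : ℕ} (A : Fin l → Finset (Fin m))
    (hA : ∀ s, (A s).card = w) :
    (univ.filter fun y : Fin l → Fin m => (univ.filter fun s => y s ∈ A s).card = v).card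
      = Nat.choose l v * (w ^ v * (m - w) ^ (l - v)) := by
  classical
  have key : (univ.filter fun y : Fin l → Fin m => (univ.filter fun s => y s ∈ A s).card = v)
      = (powersetCard v (univ : Finset (Fin l))).biUnion
          (fun S => Fintype.piFinset fun s => if s ∈ S then A s else (A s)ᶜ) := by
    ext y
    simp only [mem_filter, mem_univ, true_and, mem_biUnion, mem_powersetCard,
      Fintype.mem_piFinset]
    constructor
    · intro h
      refine ⟨univ.filter fun s => y s ∈ A s, ⟨subset_univ _, h⟩, fun s => ?_⟩
      by_cases hs : y s ∈ A s <;> simp [hs]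
    · rintro ⟨S, ⟨-, hcard⟩, hy⟩
      have : univ.filter (fun s => y s ∈ A s) = S := by
        ext s
        simp only [mem_filter, mem_univ, true_and]
        by_cases hs : s ∈ S
        · have := hy s; rw [if_pos hs] at this; simp [hs, this]
        · have := hy s; rw [if_neg hs] at this; simp [hs]; intro hc; exact absurd hc (by simpa using this)
      rw [this, hcard]
  rw [key, card_biUnion]
  · have hterm : ∀ S ∈ powersetCard v (univ : Finset (Fin l)),
        (Fintype.piFinset fun s => if s ∈ S then A s else (A s)ᶜ).card
          = w ^ v * (m - w) ^ (l - v) := by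
      intro S hS
      rw [mem_powersetCard] at hS
      rw [Fintype.card_piFinset]
      have : ∀ s, (if s ∈ S then A s else (A s)ᶜ).card = if s ∈ S then w else m - w := by
        intro s
        by_cases hs : s ∈ S <;> simp [hs, hA s, card_compl, Fintype.card_fin]
      calc ∏ s, (if s ∈ S then A s else (A s)ᶜ).card
          = ∏ s, (if s ∈ S then w else m - w) := by
            exact Finset.prod_congr rfl fun s _ => this s
        _ = w ^ v * (m - w) ^ (l - v) := by
            rw [Finset.prod_ite, Finset.prod_const, Finset.prod_const]
            congr 1
            · congr 1
              rw [← hS.2]; congr 1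
              ext s; simp
            · congr 1
              have : univ.filter (fun s => s ∉ S) = Sᶜ := by ext s; simp
              rw [this, card_compl, Fintype.card_fin, hS.2]
    rw [Finset.sum_congr rfl hterm, Finset.sum_const, card_powersetCard, card_univ,
      Fintype.card_fin, smul_eq_mul]
  · intro S hS S' hS' hne
    refine Finset.disjoint_left.mpr fun y hy hy' => hne ?_
    rw [Fintype.mem_piFinset] at hy hy'
    ext s
    constructor
    · intro hs
      by_contra hs'
      have h1 := hy s; rw [if_pos hs] at h1
      have h2 := hy' s; rw [if_neg hs'] at h2
      exact absurd h1 (by simpa using h2)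
    · intro hs
      by_contra hs'
      have h1 := hy' s; rw [if_pos hs] at h1
      have h2 := hy s; rw [if_neg hs'] at h2
      exact absurd h1 (by simpa using h2)

lemma Amax_bddAbove (m n w d : ℕ) :
    BddAbove { c | ∃ C : Finset (Fin n → Fin m → ZMod 2), isCWAC m n w d C ∧ C.card = c } := by
  refine ⟨Fintype.card (Fin n → Fin m → ZMod 2), ?_⟩
  rintro c ⟨C, -, rfl⟩
  exact Finset.card_le_univ C |>.trans (le_of_eq (Finset.card_univ))

lemma le_Amax (m n w d : ℕ) (C : Finset (Fin n → Fin m → ZMod 2)) (h : isCWAC m n w d C) :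
    C.card ≤ Amax m n w d :=
  le_csSup (Amax_bddAbove m n w d) ⟨C, h, rfl⟩

lemma exists_Amax_code (m n w d : ℕ) (hwm : w < m) :
    ∃ C : Finset (Fin n → Fin m → ZMod 2), isCWAC m n w d C ∧ C.card = Amax m n w d := by
  have hne : ∃ x : Fin m → ZMod 2, hammingNorm x = w := by
    refine ⟨fun i => if (i : ℕ) < w then 1 else 0, ?_⟩
    have : (univ.filter fun i : Fin m => (if (i : ℕ) < w then (1 : ZMod 2) else 0) ≠ 0)
        = Finset.Iio (⟨w, hwm⟩ : Fin m) := by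
      ext i
      by_cases hi : (i : ℕ) < w <;> simp [hi, Fin.lt_def]
    show (univ.filter _).card = w
    rw [this]
    simp
  obtain ⟨x, hx⟩ := hne
  have hnonempty : { c | ∃ C : Finset (Fin n → Fin m → ZMod 2), isCWAC m n w d C ∧ C.card = c }.Nonempty := by
    refine ⟨1, {fun _ => x}, ⟨⟨_, Finset.mem_singleton_self _⟩, ?_, ?_⟩, Finset.card_singleton _⟩
    · intro X hX k; rw [Finset.mem_singleton] at hX; subst hX; exact hx
    · intro X hX Y hY hne
      rw [Finset.mem_singleton] at hX hY; subst hX; subst hY; exact absurd rfl hne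
  exact Nat.sSup_mem hnonempty (Amax_bddAbove m n w d)

def punct (m' l b : ℕ) (c : Fin (l*b) → Fin (m'+1)) (X : Fin (l*b) → Fin (m'+1) → ZMod 2) :
    Fin b → Fin (m'*l) → ZMod 2 :=
  fun j i =>
    X (finProdFinEquiv ((finProdFinEquiv.symm i).2, j))
      ((c (finProdFinEquiv ((finProdFinEquiv.symm i).2, j))).succAbove (finProdFinEquiv.symm i).1)

lemma succAbove_dist (m' : ℕ) (x y : Fin (m'+1) → ZMod 2) (p : Fin (m'+1)) :
    (∑ t : Fin m', if x (p.succAbove t) ≠ y (p.succAbove t) then 1 else 0)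
      + (if x p ≠ y p then 1 else 0) = hammingDist x y := by
  have : hammingDist x y = ∑ i, if x i ≠ y i then 1 else 0 := Finset.card_filter _ _
  rw [this, Fin.sum_univ_succAbove (fun i => if x i ≠ y i then 1 else 0) p]
  omega

lemma punct_dist (m' l b : ℕ) (c : Fin (l*b) → Fin (m'+1))
    (X Y : Fin (l*b) → Fin (m'+1) → ZMod 2) (j : Fin b) :
    hammingDist (punct m' l b c X j) (punct m' l b c Y j)
      + ∑ s : Fin l, (if X (finProdFinEquiv (s, j)) (c (finProdFinEquiv (s, j)))
            ≠ Y (finProdFinEquiv (s, j)) (c (finProdFinEquiv (s, j))) then 1 else 0)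
      = ∑ s : Fin l, hammingDist (X (finProdFinEquiv (s, j))) (Y (finProdFinEquiv (s, j))) := by
  have h0 : hammingDist (punct m' l b c X j) (punct m' l b c Y j)
      = ∑ i : Fin (m'*l), if punct m' l b c X j i ≠ punct m' l b c Y j i then 1 else 0 :=
    Finset.card_filter _ _
  have h1 : (∑ i : Fin (m'*l), if punct m' l b c X j i ≠ punct m' l b c Y j i then 1 else 0)
      = ∑ q : Fin m' × Fin l, if punct m' l b c X j (finProdFinEquiv q)
          ≠ punct m' l b c Y j (finProdFinEquiv q) then 1 else 0 :=
    (Equiv.sum_comp finProdFinEquiv _).symm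
  have h2 : ∀ (Z : Fin (l*b) → Fin (m'+1) → ZMod 2) (t : Fin m') (s : Fin l),
      punct m' l b c Z j (finProdFinEquiv (t, s))
        = Z (finProdFinEquiv (s, j))
            ((c (finProdFinEquiv (s, j))).succAbove t) := by
    intro Z t s
    simp [punct]
  rw [h0, h1, Fintype.sum_prod_type, Finset.sum_comm, ← Finset.sum_add_distrib]
  refine Finset.sum_congr rfl fun s _ => ?_
  simp only [h2]
  exact succAbove_dist m' (X (finProdFinEquiv (s, j))) (Y (finProdFinEquiv (s, j)))
    (c (finProdFinEquiv (s, j)))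

lemma punct_arrDist (m' l b : ℕ) (c : Fin (l*b) → Fin (m'+1))
    (X Y : Fin (l*b) → Fin (m'+1) → ZMod 2) :
    arrDist (punct m' l b c X) (punct m' l b c Y)
      + ∑ j : Fin b, ∑ s : Fin l, (if X (finProdFinEquiv (s, j)) (c (finProdFinEquiv (s, j)))
            ≠ Y (finProdFinEquiv (s, j)) (c (finProdFinEquiv (s, j))) then 1 else 0)
      = arrDist X Y := by
  calc arrDist (punct m' l b c X) (punct m' l b c Y)
      + ∑ j : Fin b, ∑ s : Fin l, (if X (finProdFinEquiv (s, j)) (c (finProdFinEquiv (s, j)))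
            ≠ Y (finProdFinEquiv (s, j)) (c (finProdFinEquiv (s, j))) then 1 else 0)
      = ∑ j : Fin b, (hammingDist (punct m' l b c X j) (punct m' l b c Y j)
          + ∑ s : Fin l, (if X (finProdFinEquiv (s, j)) (c (finProdFinEquiv (s, j)))
            ≠ Y (finProdFinEquiv (s, j)) (c (finProdFinEquiv (s, j))) then 1 else 0)) := by
        rw [arrDist, Finset.sum_add_distrib]
    _ = ∑ j : Fin b, ∑ s : Fin l,
          hammingDist (X (finProdFinEquiv (s, j))) (Y (finProdFinEquiv (s, j))) :=
        Finset.sum_congr rfl fun j _ => punct_dist m' l b c X Y j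
    _ = ∑ q : Fin l × Fin b, hammingDist (X (finProdFinEquiv q)) (Y (finProdFinEquiv q)) := by
        rw [Fintype.sum_prod_type_right]
    _ = arrDist X Y := by
        rw [arrDist]
        exact Equiv.sum_comp finProdFinEquiv (fun k => hammingDist (X k) (Y k))

lemma punct_norm (m' l b : ℕ) (c : Fin (l*b) → Fin (m'+1))
    (X : Fin (l*b) → Fin (m'+1) → ZMod 2) (j : Fin b) :
    hammingNorm (punct m' l b c X j)
      + ∑ s : Fin l, (if X (finProdFinEquiv (s, j)) (c (finProdFinEquiv (s, j))) ≠ 0 then 1 else 0)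
      = ∑ s : Fin l, hammingNorm (X (finProdFinEquiv (s, j))) := by
  have h := punct_dist m' l b c X 0 j
  have h0 : punct m' l b c 0 = 0 := rfl
  rw [h0] at h
  simpa [hammingDist_zero_right] using h

lemma succAbove_norm1 (m' : ℕ) (x : Fin (m'+1) → ZMod 2) (p : Fin (m'+1)) :
    (∑ t : Fin m', if x (p.succAbove t) ≠ 0 then 1 else 0)
      + (if x p ≠ 0 then 1 else 0) = hammingNorm x := by
  simpa [hammingDist_zero_right] using succAbove_dist m' x 0 p

def goodC (m' l b v : ℕ) (c : Fin (l*b) → Fin (m'+1))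
    (X : Fin (l*b) → Fin (m'+1) → ZMod 2) : Prop :=
  ∀ j : Fin b, (univ.filter fun s : Fin l =>
      X (finProdFinEquiv (s, j)) (c (finProdFinEquiv (s, j))) ≠ 0).card = v

instance goodC.dec (m' l b v : ℕ) (c : Fin (l*b) → Fin (m'+1))
    (X : Fin (l*b) → Fin (m'+1) → ZMod 2) : Decidable (goodC m' l b v c X) := by
  unfold goodC; infer_instance

lemma step1 (m' l b v w : ℕ) (X : Fin (l*b) → Fin (m'+1) → ZMod 2)
    (hXw : ∀ k, hammingNorm (X k) = w) :
    (univ.filter fun c : Fin (l*b) → Fin (m'+1) => goodC m' l b v c X).card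
      = (Nat.choose l v * (w ^ v * (m'+1-w) ^ (l-v))) ^ b := by
  classical
  set A : Fin b → Fin l → Finset (Fin (m'+1)) :=
    fun j s => univ.filter fun a => X (finProdFinEquiv (s, j)) a ≠ 0 with hA
  have hAcard : ∀ j s, (A j s).card = w := fun j s => hXw (finProdFinEquiv (s, j))
  have hbij : (univ.filter fun c : Fin (l*b) → Fin (m'+1) => goodC m' l b v c X).card
      = (univ.filter fun g : Fin b → Fin l → Fin (m'+1) =>
          ∀ j, (univ.filter fun s => g j s ∈ A j s).card = v).card := by
    refine Finset.card_bij' (fun c _ => fun j s => c (finProdFinEquiv (s, j)))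
      (fun g _ => fun k => g (finProdFinEquiv.symm k).2 (finProdFinEquiv.symm k).1)
      ?_ ?_ ?_ ?_
    · intro c hc
      simp only [mem_filter, mem_univ, true_and] at hc ⊢
      intro j
      have heq : (univ.filter fun s : Fin l => c (finProdFinEquiv (s, j)) ∈ A j s)
          = (univ.filter fun s : Fin l =>
              X (finProdFinEquiv (s, j)) (c (finProdFinEquiv (s, j))) ≠ 0) := by
        ext s; simp [hA]
      rw [heq]
      exact hc j
    · intro g hg
      simp only [mem_filter, mem_univ, true_and] at hg ⊢
      intro j
      have heq : (univ.filter fun s : Fin l =>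
            X (finProdFinEquiv (s, j))
              ((fun k => g (finProdFinEquiv.symm k).2 (finProdFinEquiv.symm k).1)
                (finProdFinEquiv (s, j))) ≠ 0)
          = (univ.filter fun s : Fin l => g j s ∈ A j s) := by
        ext s; simp [hA]
      exact heq ▸ hg j
    · intro c hc
      funext k
      show c (finProdFinEquiv ((finProdFinEquiv.symm k).1, (finProdFinEquiv.symm k).2)) = c k
      rw [Prod.mk.eta, Equiv.apply_symm_apply]
    · intro g hg
      funext j s
      show g (finProdFinEquiv.symm (finProdFinEquiv (s, j))).2
        (finProdFinEquiv.symm (finProdFinEquiv (s, j))).1 = g j s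
      rw [Equiv.symm_apply_apply]
  rw [hbij]
  have hpi : (univ.filter fun g : Fin b → Fin l → Fin (m'+1) =>
        ∀ j, (univ.filter fun s => g j s ∈ A j s).card = v)
      = Fintype.piFinset (fun j => univ.filter fun y : Fin l → Fin (m'+1) =>
          (univ.filter fun s => y s ∈ A j s).card = v) := by
    ext g
    simp [Fintype.mem_piFinset]
  rw [hpi, Fintype.card_piFinset]
  calc ∏ j : Fin b, (univ.filter fun y : Fin l → Fin (m'+1) =>
        (univ.filter fun s => y s ∈ A j s).card = v).card
      = ∏ _j : Fin b, (Nat.choose l v * (w ^ v * (m'+1-w) ^ (l-v))) :=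
        Finset.prod_congr rfl fun j _ => count_block (A j) (hAcard j)
    _ = (Nat.choose l v * (w ^ v * (m'+1-w) ^ (l-v))) ^ b := by
        rw [Finset.prod_const, card_univ, Fintype.card_fin]

lemma step3 (m' l b v w d : ℕ) (C : Finset (Fin (l*b) → Fin (m'+1) → ZMod 2))
    (hCw : ∀ X ∈ C, ∀ k, hammingNorm (X k) = w)
    (hCd : ∀ X ∈ C, ∀ Y ∈ C, X ≠ Y → 2 * d ≤ arrDist X Y)
    (hd : b * min v (l - v) ≤ d)
    (c : Fin (l*b) → Fin (m'+1)) :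
    (C.filter fun X => goodC m' l b v c X).card
      ≤ Amax (m'*l) b (l*w - v) (d - b * min v (l-v)) := by
  classical
  by_cases hne : (C.filter fun X => goodC m' l b v c X).Nonempty
  · set Cc := C.filter fun X => goodC m' l b v c X with hCc
    have hmem : ∀ X ∈ Cc, X ∈ C ∧ goodC m' l b v c X := by
      intro X hX; rwa [hCc, mem_filter] at hX
    have hinj : Set.InjOn (punct m' l b c) Cc := by
      intro X hX Y hY hP
      rw [Finset.mem_coe] at hX hY
      obtain ⟨hXC, hXg⟩ := hmem X hX
      obtain ⟨hYC, hYg⟩ := hmem Y hY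
      funext k a
      obtain ⟨⟨s, j⟩, rfl⟩ : ∃ q : Fin l × Fin b, finProdFinEquiv q = k :=
        ⟨finProdFinEquiv.symm k, Equiv.apply_symm_apply _ k⟩
      have hsucc : ∀ t : Fin m',
          X (finProdFinEquiv (s,j)) ((c (finProdFinEquiv (s,j))).succAbove t)
            = Y (finProdFinEquiv (s,j)) ((c (finProdFinEquiv (s,j))).succAbove t) := by
        intro t
        have h := congrFun (congrFun hP j) (finProdFinEquiv (t, s))
        simpa [punct] using h
      have hp : X (finProdFinEquiv (s,j)) (c (finProdFinEquiv (s,j)))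
          = Y (finProdFinEquiv (s,j)) (c (finProdFinEquiv (s,j))) := by
        have hnx := succAbove_norm1 m' (X (finProdFinEquiv (s,j))) (c (finProdFinEquiv (s,j)))
        have hny := succAbove_norm1 m' (Y (finProdFinEquiv (s,j))) (c (finProdFinEquiv (s,j)))
        rw [hCw X hXC (finProdFinEquiv (s,j))] at hnx
        rw [hCw Y hYC (finProdFinEquiv (s,j))] at hny
        have hsumeq : (∑ t : Fin m',
            if X (finProdFinEquiv (s,j)) ((c (finProdFinEquiv (s,j))).succAbove t) ≠ 0
              then 1 else 0)
            = ∑ t : Fin m',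
            if Y (finProdFinEquiv (s,j)) ((c (finProdFinEquiv (s,j))).succAbove t) ≠ 0
              then 1 else 0 :=
          Finset.sum_congr rfl fun t _ => by rw [hsucc t]
        have hite : (if X (finProdFinEquiv (s,j)) (c (finProdFinEquiv (s,j))) ≠ 0
            then (1:ℕ) else 0)
            = (if Y (finProdFinEquiv (s,j)) (c (finProdFinEquiv (s,j))) ≠ 0 then 1 else 0) := by
          omega
        apply zmod2_eq_of_iff
        by_cases h1 : X (finProdFinEquiv (s,j)) (c (finProdFinEquiv (s,j))) ≠ 0 <;>
          by_cases h2 : Y (finProdFinEquiv (s,j)) (c (finProdFinEquiv (s,j))) ≠ 0 <;>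
          simp [h1, h2] at hite ⊢
      by_cases ha : a = c (finProdFinEquiv (s,j))
      · rw [ha]; exact hp
      · obtain ⟨t, ht⟩ := Fin.exists_succAbove_eq ha
        rw [← ht]; exact hsucc t
    have hcard : Cc.card = (Cc.image (punct m' l b c)).card :=
      (Finset.card_image_of_injOn hinj).symm
    have hcode : isCWAC (m'*l) b (l*w - v) (d - b * min v (l-v)) (Cc.image (punct m' l b c)) := by
      refine ⟨hne.image _, ?_, ?_⟩
      · rintro Z hZ j
        rw [mem_image] at hZ
        obtain ⟨X, hX, rfl⟩ := hZ
        obtain ⟨hXC, hXg⟩ := hmem X hX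
        have hpn := punct_norm m' l b c X j
        have hsum : ∑ s : Fin l, hammingNorm (X (finProdFinEquiv (s, j))) = l * w := by
          rw [Finset.sum_congr rfl fun s _ => hCw X hXC (finProdFinEquiv (s, j)),
            Finset.sum_const, card_univ, Fintype.card_fin, smul_eq_mul]
        have hitesum : ∑ s : Fin l,
            (if X (finProdFinEquiv (s, j)) (c (finProdFinEquiv (s, j))) ≠ 0
              then 1 else 0) = v := by
          rw [← Finset.card_filter]
          exact hXg j
        omega
      · rintro Z hZ W hW hZW
        rw [mem_image] at hZ hW
        obtain ⟨X, hX, rfl⟩ := hZ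
        obtain ⟨Y, hY, rfl⟩ := hW
        obtain ⟨hXC, hXg⟩ := hmem X hX
        obtain ⟨hYC, hYg⟩ := hmem Y hY
        have hXY : X ≠ Y := fun h => hZW (by rw [h])
        have hdist := hCd X hXC Y hYC hXY
        have harr := punct_arrDist m' l b c X Y
        have hT : (∑ j : Fin b, ∑ s : Fin l,
            (if X (finProdFinEquiv (s, j)) (c (finProdFinEquiv (s, j)))
              ≠ Y (finProdFinEquiv (s, j)) (c (finProdFinEquiv (s, j))) then 1 else 0))
            ≤ 2 * (b * min v (l-v)) := by
          calc (∑ j : Fin b, ∑ s : Fin l,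
              (if X (finProdFinEquiv (s, j)) (c (finProdFinEquiv (s, j)))
                ≠ Y (finProdFinEquiv (s, j)) (c (finProdFinEquiv (s, j))) then 1 else 0))
              ≤ ∑ _j : Fin b, 2 * min v (l - v) := by
                refine Finset.sum_le_sum fun j _ => ?_
                rw [← Finset.card_filter]
                exact symmdiff_count
                  (fun s => X (finProdFinEquiv (s, j)) (c (finProdFinEquiv (s, j))))
                  (fun s => Y (finProdFinEquiv (s, j)) (c (finProdFinEquiv (s, j))))
                  (hXg j) (hYg j)
            _ = 2 * (b * min v (l-v)) := by
                rw [Finset.sum_const, card_univ, Fintype.card_fin, smul_eq_mul]; ring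
        have hMd : b * min v (l - v) ≤ d := hd
        generalize hM : b * min v (l - v) = M at *
        omega
    calc Cc.card = (Cc.image (punct m' l b c)).card := hcard
      _ ≤ Amax (m'*l) b (l*w - v) (d - b * min v (l-v)) := le_Amax _ _ _ _ _ hcode
  · rw [Finset.not_nonempty_iff_eq_empty] at hne
    rw [hne]
    simp

theorem aux_main (m' b w d l v : ℕ) (hwm : w < m'+1) (hvl : v ≤ l)
    (hd : b * min v (l - v) ≤ d) :
    (Nat.choose l v * (w ^ v * (m'+1-w) ^ (l-v))) ^ b * Amax (m'+1) (l*b) w d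
      ≤ (m'+1) ^ (l*b) * Amax (m'*l) b (l*w - v) (d - b * min v (l-v)) := by
  classical
  obtain ⟨C, hC, hCcard⟩ := exists_Amax_code (m'+1) (l*b) w d hwm
  obtain ⟨hCne, hCw, hCd⟩ := hC
  set K := Nat.choose l v * (w ^ v * (m'+1-w) ^ (l-v)) with hK
  set A' := Amax (m'*l) b (l*w - v) (d - b * min v (l-v)) with hA'
  have step2 : ∑ c : Fin (l*b) → Fin (m'+1), (C.filter fun X => goodC m' l b v c X).card
      = K ^ b * C.card := by
    calc ∑ c : Fin (l*b) → Fin (m'+1), (C.filter fun X => goodC m' l b v c X).card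
        = ∑ c : Fin (l*b) → Fin (m'+1), ∑ X ∈ C, if goodC m' l b v c X then 1 else 0 :=
          Finset.sum_congr rfl fun c _ => Finset.card_filter _ _
      _ = ∑ X ∈ C, ∑ c : Fin (l*b) → Fin (m'+1), if goodC m' l b v c X then 1 else 0 :=
          Finset.sum_comm
      _ = ∑ X ∈ C, (univ.filter fun c : Fin (l*b) → Fin (m'+1) => goodC m' l b v c X).card :=
          Finset.sum_congr rfl fun X _ => (Finset.card_filter _ _).symm
      _ = ∑ X ∈ C, K ^ b :=
          Finset.sum_congr rfl fun X hX => step1 m' l b v w X (hCw X hX)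
      _ = K ^ b * C.card := by rw [Finset.sum_const, smul_eq_mul, mul_comm]
  have final : K ^ b * C.card ≤ (m'+1) ^ (l*b) * A' := by
    rw [← step2]
    calc ∑ c : Fin (l*b) → Fin (m'+1), (C.filter fun X => goodC m' l b v c X).card
        ≤ ∑ _c : Fin (l*b) → Fin (m'+1), A' :=
          Finset.sum_le_sum fun c _ => step3 m' l b v w d C hCw hCd hd c
      _ = (m'+1) ^ (l*b) * A' := by
          rw [Finset.sum_const, smul_eq_mul, card_univ, Fintype.card_fun,
            Fintype.card_fin, Fintype.card_fin]
  rw [hCcard] at final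
  exact final

theorem johnson_bound_CWAC_delta_max (m n w d l v : ℕ)
    (hw : 1 ≤ w) (hwm : w < m) (hl : l ∣ n) (hv1 : 1 ≤ v) (hvl : v ≤ l)
    (hvlw : v ≤ l * w) (hd : (n / l) * min v (l - v) ≤ d) :
    (Nat.choose l v) ^ (n / l) * w ^ (n * v / l) * (m - w) ^ (n - n * v / l) * Amax m n w d
      ≤ m ^ n * Amax ((m - 1) * l) (n / l) (l * w - v) (d - (n / l) * min v (l - v)) := by
  obtain ⟨m', rfl⟩ : ∃ m', m = m' + 1 := ⟨m - 1, by omega⟩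
  obtain ⟨b, rfl⟩ : ∃ b, n = l * b := ⟨n / l, (Nat.mul_div_cancel' hl).symm⟩
  have hl0 : 0 < l := by omega
  have e1 : l * b / l = b := Nat.mul_div_cancel_left b hl0
  have e2 : l * b * v / l = b * v := by
    rw [mul_assoc]
    exact Nat.mul_div_cancel_left (b * v) hl0
  have e3 : m' + 1 - 1 = m' := by omega
  rw [e1, e2, e3]
  have ekey : (Nat.choose l v) ^ b * w ^ (b * v) * (m' + 1 - w) ^ (l * b - b * v)
      = (Nat.choose l v * (w ^ v * (m' + 1 - w) ^ (l - v))) ^ b := by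
    have h1 : v * b = b * v := Nat.mul_comm _ _
    have h2 : (l - v) * b = l * b - b * v := by rw [Nat.sub_mul, Nat.mul_comm v b]
    rw [mul_pow, mul_pow, ← pow_mul, ← pow_mul, h1, h2]
    ring
  rw [ekey]
  exact aux_main m' b w d l v hwm hvl (by rw [e1] at hd; exact hd)
end

section
/- For all natural numbers m, n, w, u, d with w ≤ m, u ≤ m and d ≥ 1, A(m,n,w,d) · V ≤ (Nat.choose m u)^n, where V is the minimum, over all X ∈ J(m,w)^n, of the number of words Y ∈ J(m,u)^n whose Hamming distance from X is at most d−1. -/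
open Finset

/-! The radius-`(d - 1)` balls in `J(m,u)^n` around the words of a code of minimum distance `2d`
are pairwise disjoint by the triangle inequality, each has at least `V` elements, and all of them
lie in `J(m,u)^n`, which has at most `binom(m,u)^n` elements. -/

theorem Finset.card_mul_le_card_of_pairwiseDisjoint {ι α : Type*} [DecidableEq α]
    {s : Finset ι} {t : ι → Finset α} {S : Finset α} {k : ℕ}
    (hk : ∀ i ∈ s, k ≤ #(t i)) (hdisj : (s : Set ι).PairwiseDisjoint t)
    (hS : ∀ i ∈ s, t i ⊆ S) : #s * k ≤ #S :=
  calc #s * k ≤ ∑ i ∈ s, #(t i) := by simpa using s.card_nsmul_le_sum _ _ hk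
    _ = #(s.biUnion t) := (card_biUnion hdisj).symm
    _ ≤ #S := card_le_card (biUnion_subset.2 hS)

lemma card_hammingNorm_eq_le_choose (ι : Type*) [Fintype ι] [DecidableEq ι] (u : ℕ) :
    #{x : ι → ZMod 2 | hammingNorm x = u} ≤ (Fintype.card ι).choose u := by
  rw [← card_univ, ← card_powersetCard]
  refine card_le_card_of_injOn (fun x => ({i | x i ≠ 0} : Finset ι))
    (fun x hx => mem_powersetCard.2 ⟨subset_univ _, (mem_filter.1 hx).2⟩) fun x _ y _ hxy => ?_
  have hZMod2 : ∀ a b : ZMod 2, (a ≠ 0 ↔ b ≠ 0) → a = b := by decide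
  funext i
  exact hZMod2 (x i) (y i) (by simpa using Finset.ext_iff.mp hxy i)

lemma card_constWeight_le_choose_pow (m n u : ℕ) :
    #{Y : Fin n → Fin m → ZMod 2 | ∀ k, hammingNorm (Y k) = u} ≤ m.choose u ^ n := by
  have hpi : ({Y : Fin n → Fin m → ZMod 2 | ∀ k, hammingNorm (Y k) = u} : Finset _) =
      Fintype.piFinset fun _ => {x : Fin m → ZMod 2 | hammingNorm x = u} := by
    ext Y; simp [Fintype.mem_piFinset]
  rw [hpi, Fintype.card_piFinset, prod_const, card_univ, Fintype.card_fin]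
  simpa using Nat.pow_le_pow_left (card_hammingNorm_eq_le_choose (Fin m) u) n

variable {m n : ℕ}

lemma arrDist_comm (X Y : Fin n → Fin m → ZMod 2) : arrDist X Y = arrDist Y X := by
  simp only [arrDist, hammingDist_comm]

lemma arrDist_triangle (X Y Z : Fin n → Fin m → ZMod 2) :
    arrDist X Z ≤ arrDist X Y + arrDist Y Z := by
  rw [arrDist, arrDist, arrDist, ← sum_add_distrib]
  exact sum_le_sum fun k _ => hammingDist_triangle _ _ _

def arrBall (u r : ℕ) (X : Fin n → Fin m → ZMod 2) : Finset (Fin n → Fin m → ZMod 2) :=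
  {Y | (∀ k, hammingNorm (Y k) = u) ∧ arrDist X Y ≤ r}

lemma arrBall_subset_constWeight (u r : ℕ) (X : Fin n → Fin m → ZMod 2) :
    arrBall u r X ⊆ ({Y | ∀ k, hammingNorm (Y k) = u} : Finset _) :=
  fun _ hY => mem_filter.2 ⟨mem_univ _, (mem_filter.1 hY).2.1⟩

lemma disjoint_arrBall {u r : ℕ} {X Y : Fin n → Fin m → ZMod 2} (h : 2 * r < arrDist X Y) :
    Disjoint (arrBall u r X) (arrBall u r Y) := by
  refine disjoint_left.2 fun Z hZX hZY => ?_
  have hXZ := (mem_filter.1 hZX).2.2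
  have hYZ := (mem_filter.1 hZY).2.2
  have := arrDist_triangle X Z Y
  rw [arrDist_comm Z Y] at this
  omega

lemma Amax_mul_le {w d k b : ℕ} (h : ∀ C, isCWAC m n w d C → #C * k ≤ b) :
    Amax m n w d * k ≤ b := by
  rw [Amax]
  set T := {c | ∃ C : Finset (Fin n → Fin m → ZMod 2), isCWAC m n w d C ∧ #C = c}
  rcases T.eq_empty_or_nonempty with hT | hT
  · simp [hT]
  · have hbdd : BddAbove T := ⟨_, by rintro _ ⟨C, -, rfl⟩; exact card_le_univ C⟩
    obtain ⟨C, hC, hcard⟩ := Nat.sSup_mem hT hbdd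
    rw [← hcard]
    exact h C hC

theorem hamming_bound_CWAC_general (m n w u d : ℕ) (hd : 1 ≤ d) :
    Amax m n w d *
        sInf { c | ∃ X : Fin n → Fin m → ZMod 2, (∀ k, hammingNorm (X k) = w) ∧
          c = (Finset.univ.filter (fun Y : Fin n → Fin m → ZMod 2 =>
            (∀ k, hammingNorm (Y k) = u) ∧ arrDist X Y ≤ d - 1)).card }
      ≤ (Nat.choose m u) ^ n := by
  refine Amax_mul_le fun C ⟨_, hCw, hCd⟩ => le_trans ?_ (card_constWeight_le_choose_pow m n u)
  refine card_mul_le_card_of_pairwiseDisjoint (t := arrBall u (d - 1))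
    (fun X hX => Nat.sInf_le ⟨X, hCw X hX, rfl⟩) (fun X hX Y hY hXY => ?_)
    (fun X _ => arrBall_subset_constWeight u (d - 1) X)
  have := hCd X hX Y hY hXY
  exact disjoint_arrBall (by omega)

theorem hamming_bound_CWAC (m n w u d : ℕ) (hw : w ≤ m) (hu : u ≤ m) (hd : 1 ≤ d) :
    Amax m n w d *
        sInf { c | ∃ X : Fin n → Fin m → ZMod 2, (∀ k, hammingNorm (X k) = w) ∧
          c = (Finset.univ.filter (fun Y : Fin n → Fin m → ZMod 2 =>
            (∀ k, hammingNorm (Y k) = u) ∧ arrDist X Y ≤ d - 1)).card }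
      ≤ (Nat.choose m u) ^ n :=
  hamming_bound_CWAC_general m n w u d hd
end

section
/- Let m, n, w_1, w_2, d be natural numbers with 1 ≤ w_1, w_1 ∣ w_2, w_2 ∣ m, and w_1 ∣ n·w_2. Then (Nat.choose m w_2)^n · A((m/w_2)·w_1, n·w_2/w_1, w_1, d) ≥ (Nat.choose ((m/w_2)·w_1) w_1)^(n·w_2/w_1) · A(m, n, w_2, d). -/
open Finset

/-! Choose, for each row of a word of `J(m, w₂)^n`, a bijection `τ : Fin t × Fin m' ≃ Fin m` with
`t = w₂ / w₁` and `m = t * m'`, and cut the permuted row into `t` blocks of length `m'`. This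
preserves distances, so for a fixed choice `σ` of the `n` bijections, the codewords all of whose
blocks have weight `w₁` form a code in `J(m', w₁)^(n * t)`, of size at most `A(m', n * t, w₁, d)`.
Average over the `(m!)^n` choices of `σ`: a row of weight `w₂` is cut into blocks of weight `w₁` by
exactly `C(m', w₁)^t * m! / C(m, w₂)` bijections `τ`, because the fibres of `τ ↦ τ⁻¹(supp)` over
the `w₂`-subsets of `Fin t × Fin m'` all have the same size. -/

section Counting

variable {α β J M : Type*} [Fintype α] [Fintype β] [Fintype J] [Fintype M]
  [DecidableEq α] [DecidableEq β] [DecidableEq J] [DecidableEq M]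

theorem exists_perm_mem_iff_mem_of_card_eq {T T' : Finset β} (h : #T = #T') :
    ∃ ρ : Equiv.Perm β, ∀ b, ρ b ∈ T' ↔ b ∈ T := by
  refine ⟨(T.equivOfCardEq h).extendSubtype, fun b => ⟨fun hb => ?_, fun hb => ?_⟩⟩
  · by_contra hbT
    exact Equiv.extendSubtype_not_mem (p := (· ∈ T)) (q := (· ∈ T')) _ b hbT hb
  · exact Equiv.extendSubtype_mem (p := (· ∈ T)) (q := (· ∈ T')) _ b hb

theorem card_filter_map_symm_eq_le (s : Finset α) {T T' : Finset β} (h : #T = #T') :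
    #{τ : β ≃ α | s.map τ.symm.toEmbedding = T}
      ≤ #{τ : β ≃ α | s.map τ.symm.toEmbedding = T'} := by
  obtain ⟨ρ, hρ⟩ := exists_perm_mem_iff_mem_of_card_eq h.symm
  refine card_le_card_of_injOn (ρ.trans ·) (fun τ hτ => ?_) (fun τ _ τ' _ hττ' => ?_)
  · simp only [coe_filter, mem_univ, true_and] at hτ ⊢
    ext b
    rw [mem_map_equiv, ← hρ, ← hτ, mem_map_equiv]
    rfl
  · exact Equiv.ext fun b => by simpa using congrArg (· (ρ.symm b)) hττ'

theorem card_filter_map_symm_mem_mul_choose (e : β ≃ α) (s : Finset α) (G : Finset (Finset β))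
    (hG : ∀ T ∈ G, #T = #s) :
    #{τ : β ≃ α | s.map τ.symm.toEmbedding ∈ G} * (Fintype.card β).choose #s
      = #G * (Fintype.card β).factorial := by
  set fiber : Finset β → ℕ := fun T => #{τ : β ≃ α | s.map τ.symm.toEmbedding = T}
  set T₀ := s.map e.symm.toEmbedding
  have hT₀ : #T₀ = #s := card_map _
  have fiber_eq : ∀ T, #T = #s → fiber T = fiber T₀ := fun T hT =>
    (card_filter_map_symm_eq_le s (hT.trans hT₀.symm)).antisymm
      (card_filter_map_symm_eq_le s (hT₀.trans hT.symm))
  have good : #{τ : β ≃ α | s.map τ.symm.toEmbedding ∈ G} = #G * fiber T₀ := by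
    rw [← sum_card_fiberwise_eq_card_filter, sum_const_nat fun T hT => fiber_eq T (hG T hT)]
  have total : (Fintype.card β).factorial = (Fintype.card β).choose #s * fiber T₀ := by
    rw [← Fintype.card_equiv e, ← card_univ, card_eq_sum_card_fiberwise
      (f := fun τ : β ≃ α => s.map τ.symm.toEmbedding) (t := powersetCard #s univ),
      sum_const_nat fun T hT => fiber_eq T (mem_powersetCard_univ.mp hT), card_powersetCard,
      card_univ]
    exact fun τ _ => mem_powersetCard_univ.mpr (card_map _)
  rw [good, total]
  ring

theorem card_filter_forall_card_slice_eq (w : ℕ) :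
    #{T : Finset (J × M) | ∀ j, #{i | (j, i) ∈ T} = w}
      = (Fintype.card M).choose w ^ Fintype.card J := by
  rw [← card_univ, ← card_powersetCard, ← card_univ, ← prod_const, ← Fintype.card_piFinset]
  refine card_nbij' (fun T j => {i | (j, i) ∈ T})
    (fun F => univ.filter fun p : J × M => p.2 ∈ F p.1) ?_ ?_ ?_ ?_
  · intro T hT
    simpa [mem_powersetCard_univ] using hT
  · intro F hF
    simpa [mem_powersetCard_univ] using hF
  · intro T _
    ext p
    simp
  · intro F _
    ext j i
    simp

theorem card_eq_sum_card_slice (T : Finset (J × M)) : #T = ∑ j, #{i | (j, i) ∈ T} := by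
  simp only [card_filter, ← Fintype.sum_prod_type']
  rw [← card_filter, filter_univ_mem]

theorem card_filter_forall_card_slice_mul_choose (e : J × M ≃ α) (s : Finset α) {w : ℕ}
    (hs : #s = Fintype.card J * w) :
    #{τ : J × M ≃ α | ∀ j, #{i | τ (j, i) ∈ s} = w} * (Fintype.card α).choose #s
      = (Fintype.card M).choose w ^ Fintype.card J * (Fintype.card α).factorial := by
  set G : Finset (Finset (J × M)) := {T | ∀ j, #{i | (j, i) ∈ T} = w}
  have hG : ∀ T ∈ G, #T = #s := fun T hT => by
    rw [card_eq_sum_card_slice, sum_const_nat fun j _ => (mem_filter.mp hT).2 j, card_univ, hs]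
  rw [← Fintype.card_congr e, ← card_filter_forall_card_slice_eq,
    ← card_filter_map_symm_mem_mul_choose e s G hG]
  congr 2
  ext τ
  simp [G, mem_map_equiv]

end Counting

section Amax

variable {m n w d : ℕ}

theorem bddAbove_card_isCWAC :
    BddAbove {c | ∃ C : Finset (Fin n → Fin m → ZMod 2), isCWAC m n w d C ∧ #C = c} :=
  ⟨Fintype.card (Fin n → Fin m → ZMod 2), fun _ ⟨C, _, hC⟩ => hC ▸ card_le_univ C⟩

theorem card_le_Amax {C : Finset (Fin n → Fin m → ZMod 2)} (hC : isCWAC m n w d C) :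
    #C ≤ Amax m n w d :=
  le_csSup (bddAbove_card_isCWAC) ⟨C, hC, rfl⟩

theorem exists_isCWAC_card_eq_Amax (h : Amax m n w d ≠ 0) :
    ∃ C : Finset (Fin n → Fin m → ZMod 2), isCWAC m n w d C ∧ #C = Amax m n w d := by
  refine Nat.sSup_mem ?_ (bddAbove_card_isCWAC)
  by_contra hempty
  rw [Set.not_nonempty_iff_eq_empty] at hempty
  exact h (by rw [Amax, hempty, csSup_empty]; rfl)

end Amax

theorem hammingDist_comp_equiv {ι ι' β : Type*} [Fintype ι] [Fintype ι'] [DecidableEq β]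
    (e : ι' ≃ ι) (x y : ι → β) : hammingDist (x ∘ e) (y ∘ e) = hammingDist x y :=
  card_equiv e (by simp)

theorem arrDist_eq_hammingDist_uncurry {m n : ℕ} (X Y : Fin n → Fin m → ZMod 2) :
    arrDist X Y = hammingDist (Function.uncurry X) (Function.uncurry Y) := by
  simp only [arrDist, hammingDist, card_filter]
  rw [Fintype.sum_prod_type]
  rfl

section SplitRows

variable {m m' n t : ℕ}

/-- Row `finProdFinEquiv (k, j)` of `splitRows σ X` is block `j` of row `k` of `X`, read through
`σ k`. -/
def splitEquiv (σ : Fin n → (Fin t × Fin m' ≃ Fin m)) : Fin (n * t) × Fin m' ≃ Fin n × Fin m :=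
  (finProdFinEquiv.symm.prodCongr (Equiv.refl _)).trans
    ((Equiv.prodAssoc _ _ _).trans (Equiv.prodShear (Equiv.refl _) σ))

def splitRows (σ : Fin n → (Fin t × Fin m' ≃ Fin m)) (X : Fin n → Fin m → ZMod 2) :
    Fin (n * t) → Fin m' → ZMod 2 :=
  Function.curry (Function.uncurry X ∘ splitEquiv σ)

theorem arrDist_splitRows (σ : Fin n → (Fin t × Fin m' ≃ Fin m)) (X Y : Fin n → Fin m → ZMod 2) :
    arrDist (splitRows σ X) (splitRows σ Y) = arrDist X Y := by
  simp only [arrDist_eq_hammingDist_uncurry, splitRows, Function.uncurry_curry,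
    hammingDist_comp_equiv]

theorem splitRows_injective (σ : Fin n → (Fin t × Fin m' ≃ Fin m)) :
    Function.Injective (splitRows σ) := by
  intro X Y h
  have := arrDist_splitRows σ X Y
  rw [h, arrDist_eq_hammingDist_uncurry, arrDist_eq_hammingDist_uncurry, hammingDist_self,
    eq_comm, hammingDist_eq_zero] at this
  exact funext fun k => funext fun i => congrFun this (k, i)

theorem hammingNorm_splitRows (σ : Fin n → (Fin t × Fin m' ≃ Fin m)) (X : Fin n → Fin m → ZMod 2)
    (k : Fin n) (j : Fin t) :
    hammingNorm (splitRows σ X (finProdFinEquiv (k, j)))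
      = hammingNorm fun i => X k (σ k (j, i)) := by
  congr 1
  ext i
  simp [splitRows, splitEquiv]

end SplitRows

section Averaging

variable {m m' n t w₁ w₂ d : ℕ}

theorem card_filter_hammingNorm_splitRows_le_Amax {C : Finset (Fin n → Fin m → ZMod 2)}
    (hC : isCWAC m n w₂ d C) (σ : Fin n → (Fin t × Fin m' ≃ Fin m)) :
    #{X ∈ C | ∀ k, hammingNorm (splitRows σ X k) = w₁} ≤ Amax m' (n * t) w₁ d := by
  set D := {X ∈ C | ∀ k, hammingNorm (splitRows σ X k) = w₁}
  obtain hD | hD := D.eq_empty_or_nonempty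
  · simp [hD]
  rw [← card_image_of_injective D (splitRows_injective σ)]
  refine card_le_Amax ⟨hD.image _, ?_, ?_⟩
  · simp only [mem_image]
    rintro _ ⟨X, hX, rfl⟩
    exact (mem_filter.mp hX).2
  · simp only [mem_image]
    rintro _ ⟨X, hX, rfl⟩ _ ⟨Y, hY, rfl⟩ hXY
    rw [arrDist_splitRows]
    exact hC.2.2 X (mem_filter.mp hX).1 Y (mem_filter.mp hY).1 (ne_of_apply_ne _ hXY)

theorem card_filter_hammingNorm_splitRows (X : Fin n → Fin m → ZMod 2) :
    #{σ : Fin n → (Fin t × Fin m' ≃ Fin m) | ∀ k, hammingNorm (splitRows σ X k) = w₁}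
      = ∏ k, #{τ : Fin t × Fin m' ≃ Fin m | ∀ j, hammingNorm (fun i => X k (τ (j, i))) = w₁} := by
  rw [← Fintype.card_piFinset]
  congr 1
  ext σ
  simp only [mem_filter, mem_univ, true_and, Fintype.mem_piFinset,
    ← finProdFinEquiv.forall_congr_right, Prod.forall, hammingNorm_splitRows]

theorem choose_pow_mul_card_le_of_isCWAC (hm : t * m' = m) (hw : t * w₁ = w₂)
    {C : Finset (Fin n → Fin m → ZMod 2)} (hC : isCWAC m n w₂ d C) :
    m'.choose w₁ ^ (n * t) * #C ≤ m.choose w₂ ^ n * Amax m' (n * t) w₁ d := by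
  set N : (Fin n → Fin m → ZMod 2) → Fin n → ℕ := fun X k =>
    #{τ : Fin t × Fin m' ≃ Fin m | ∀ j, hammingNorm (fun i => X k (τ (j, i))) = w₁}
  have e : Fin t × Fin m' ≃ Fin m := finProdFinEquiv.trans (finCongr hm)
  have hN : ∀ X ∈ C, ∀ k, N X k * m.choose w₂ = m'.choose w₁ ^ t * m.factorial := by
    intro X hX k
    have hs : #{a | X k a ≠ 0} = w₂ := hC.2.1 X hX k
    have h := card_filter_forall_card_slice_mul_choose e _ (by rw [hs, Fintype.card_fin, hw])
    simp only [Fintype.card_fin, hs, mem_filter, mem_univ, true_and] at h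
    exact h
  have hsum : ∑ X ∈ C, ∏ k, N X k ≤ m.factorial ^ n * Amax m' (n * t) w₁ d :=
    calc ∑ X ∈ C, ∏ k, N X k
        = ∑ σ : Fin n → (Fin t × Fin m' ≃ Fin m),
            #{X ∈ C | ∀ k, hammingNorm (splitRows σ X k) = w₁} := by
          simp only [N, ← card_filter_hammingNorm_splitRows]
          exact sum_card_bipartiteAbove_eq_sum_card_bipartiteBelow
            (fun X σ => ∀ k, hammingNorm (splitRows σ X k) = w₁) (s := C) (t := univ)
      _ ≤ ∑ _σ : Fin n → (Fin t × Fin m' ≃ Fin m), Amax m' (n * t) w₁ d :=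
          sum_le_sum fun σ _ => card_filter_hammingNorm_splitRows_le_Amax hC σ
      _ = m.factorial ^ n * Amax m' (n * t) w₁ d := by
          simp [Fintype.card_equiv e, hm]
  refine Nat.le_of_mul_le_mul_right ?_ (pow_pos m.factorial_pos n)
  calc m'.choose w₁ ^ (n * t) * #C * m.factorial ^ n
      = ∑ X ∈ C, ∏ k, N X k * m.choose w₂ := by
        rw [sum_congr rfl fun X hX => prod_congr rfl fun k _ => hN X hX k]
        simp only [prod_const, sum_const, card_univ, Fintype.card_fin, smul_eq_mul]
        ring
    _ = (∑ X ∈ C, ∏ k, N X k) * m.choose w₂ ^ n := by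
        simp only [prod_mul_distrib, prod_const, card_univ, Fintype.card_fin, sum_mul]
    _ ≤ m.factorial ^ n * Amax m' (n * t) w₁ d * m.choose w₂ ^ n := by gcongr
    _ = m.choose w₂ ^ n * Amax m' (n * t) w₁ d * m.factorial ^ n := by ring

theorem choose_pow_mul_Amax_le (n d : ℕ) (hm : t * m' = m) (hw : t * w₁ = w₂) :
    m'.choose w₁ ^ (n * t) * Amax m n w₂ d ≤ m.choose w₂ ^ n * Amax m' (n * t) w₁ d := by
  obtain h | h := eq_or_ne (Amax m n w₂ d) 0
  · simp [h]
  obtain ⟨C, hC, hcard⟩ := exists_isCWAC_card_eq_Amax h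
  exact hcard ▸ choose_pow_mul_card_le_of_isCWAC hm hw hC

end Averaging

theorem bassalygo_elias_CWAC_general (m n w₁ w₂ d : ℕ)
    (h12 : w₁ ∣ w₂) (h2m : w₂ ∣ m) :
    (Nat.choose ((m / w₂) * w₁) w₁) ^ (n * w₂ / w₁) * Amax m n w₂ d
      ≤ (Nat.choose m w₂) ^ n * Amax ((m / w₂) * w₁) (n * w₂ / w₁) w₁ d := by
  have hw : w₂ / w₁ * w₁ = w₂ := Nat.div_mul_cancel h12
  have hm : w₂ / w₁ * (m / w₂ * w₁) = m := by
    rw [mul_left_comm, hw, Nat.div_mul_cancel h2m]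
  rw [Nat.mul_div_assoc n h12]
  exact choose_pow_mul_Amax_le n d hm hw

theorem bassalygo_elias_CWAC (m n w₁ w₂ d : ℕ)
    (hw1 : 1 ≤ w₁) (h12 : w₁ ∣ w₂) (h2m : w₂ ∣ m) (h1n : w₁ ∣ n * w₂) :
    (Nat.choose ((m / w₂) * w₁) w₁) ^ (n * w₂ / w₁) * Amax m n w₂ d
      ≤ (Nat.choose m w₂) ^ n * Amax ((m / w₂) * w₁) (n * w₂ / w₁) w₁ d :=
  bassalygo_elias_CWAC_general m n w₁ w₂ d h12 h2m
end
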